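/- arXiv:2404.00115 — 2 statements merged into one kernel-verified Lean document; each statement's English description precedes it below -/
import Mathlib

section
/- There is no homogeneous polynomial solution of degree ≥ 2 to the minimal surface equation on ℝⁿ: if P is a homogeneous polynomial of degree m ≥ 2 satisfying (1 + |∇P|²)ΔP − ∑_{i,j} P_{x_i} P_{x_j} P_{x_i x_j} = 0 on ℝⁿ, then P = 0. -/
/-!
Both parts of the minimal surface equation are homogeneous, `ΔP` of degree `m - 2` and
`|∇P|² ΔP - Δ_∞ P` of degree `3m - 4`, so for `m ≥ 2` both vanish; in particular the
∞-Laplacian `Δ_∞ P = ∑ P_i P_j P_ij` is zero.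

Let `x₀` maximise `P²` on the unit sphere and `p₀ = P(x₀)`. By homogeneity
`P(y)² ≤ p₀² |y|^{2m}` everywhere, with equality at `x₀`, so `x₀` is a critical point of
`P² - p₀² |y|^{2m}`, i.e. `p₀ ∇P(x₀) = m p₀² x₀`. If `p₀ ≠ 0` then `∇P(x₀) = m p₀ x₀`, and Euler's
identity for the `P_i` gives `Δ_∞ P(x₀) = m p₀ (m - 1) |∇P(x₀)|² = (m - 1) m³ p₀³ ≠ 0`.
Hence `p₀ = 0`, and `P` vanishes.
-/

open MvPolynomial

namespace MvPolynomial

variable {σ R : Type*}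

section Homogeneous

variable [CommSemiring R] {φ ψ : MvPolynomial σ R} {m k : ℕ}

theorem IsHomogeneous.eq_zero_of_eq (hφ : φ.IsHomogeneous m) (hψ : ψ.IsHomogeneous k)
    (hmk : m ≠ k) (h : φ = ψ) : φ = 0 := by
  subst h
  by_contra hφ0
  exact hmk (hφ.inj_right hψ hφ0)

theorem IsHomogeneous.eval_smul (hφ : φ.IsHomogeneous m) (c : R) (x : σ → R) :
    eval (c • x) φ = c ^ m * eval x φ := by
  rw [eval_eq, eval_eq, Finset.mul_sum]
  refine Finset.sum_congr rfl fun d hd => ?_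
  simp only [Pi.smul_apply, smul_eq_mul, mul_pow]
  rw [Finset.prod_mul_distrib, Finset.prod_pow_eq_pow_sum, ← hφ.degree_eq_sum_deg_support hd]
  ring

end Homogeneous

section Operators

variable [CommRing R] [Fintype σ] {P : MvPolynomial σ R} {m : ℕ}

noncomputable def laplacian (P : MvPolynomial σ R) : MvPolynomial σ R :=
  ∑ i, pderiv i (pderiv i P)

noncomputable def gradNormSq (P : MvPolynomial σ R) : MvPolynomial σ R :=
  ∑ i, pderiv i P ^ 2

noncomputable def infLaplacian (P : MvPolynomial σ R) : MvPolynomial σ R :=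
  ∑ i, ∑ j, pderiv i P * pderiv j P * pderiv j (pderiv i P)

theorem isHomogeneous_laplacian (hP : P.IsHomogeneous m) :
    (laplacian P).IsHomogeneous (m - 2) :=
  IsHomogeneous.sum _ _ _ fun _ _ => hP.pderiv.pderiv

theorem isHomogeneous_gradNormSq (hP : P.IsHomogeneous m) :
    (gradNormSq P).IsHomogeneous (2 * m - 2) :=
  IsHomogeneous.sum _ _ _ fun _ _ => by
    convert hP.pderiv.pow 2 using 1
    omega

theorem isHomogeneous_infLaplacian (hP : P.IsHomogeneous m) :
    (infLaplacian P).IsHomogeneous (3 * m - 4) :=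
  IsHomogeneous.sum _ _ _ fun _ _ => IsHomogeneous.sum _ _ _ fun _ _ => by
    convert (hP.pderiv.mul hP.pderiv).mul hP.pderiv.pderiv using 1
    omega

theorem IsHomogeneous.infLaplacian_eq_zero_of_minimalSurface (hP : P.IsHomogeneous m)
    (hm : 2 ≤ m) (hMSE : (1 + gradNormSq P) * laplacian P - infLaplacian P = 0) :
    infLaplacian P = 0 := by
  have hrest : (infLaplacian P - gradNormSq P * laplacian P).IsHomogeneous (3 * m - 4) := by
    refine (isHomogeneous_infLaplacian hP).sub ?_
    convert (isHomogeneous_gradNormSq hP).mul (isHomogeneous_laplacian hP) using 1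
    omega
  have hlap : laplacian P = 0 :=
    (isHomogeneous_laplacian hP).eq_zero_of_eq hrest (by omega) (by linear_combination hMSE)
  simpa [hlap] using hMSE

theorem IsHomogeneous.eval_infLaplacian_of_eval_pderiv_eq (hP : P.IsHomogeneous m)
    {x : σ → R} {c : R} (hx : ∀ i, eval x (pderiv i P) = c * x i) :
    eval x (infLaplacian P) = c * (m - 1 : ℕ) * eval x (gradNormSq P) := by
  have euler (i : σ) :
      ∑ j, x j * eval x (pderiv j (pderiv i P)) = (m - 1 : ℕ) * eval x (pderiv i P) := by
    simpa using congrArg (eval x) hP.pderiv.sum_X_mul_pderiv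
  simp only [infLaplacian, gradNormSq, map_sum, map_mul, map_pow, Finset.mul_sum]
  refine Finset.sum_congr rfl fun i _ => ?_
  rw [show c * (m - 1 : ℕ) * eval x (pderiv i P) ^ 2
      = eval x (pderiv i P) * c * ((m - 1 : ℕ) * eval x (pderiv i P)) by ring,
    ← euler, Finset.mul_sum]
  refine Finset.sum_congr rfl fun j _ => ?_
  rw [hx j]
  ring

end Operators

section Calculus

variable {𝕜 : Type*} [NontriviallyNormedField 𝕜] [DecidableEq σ]

theorem hasDerivAt_eval_update (p : MvPolynomial σ 𝕜) (x : σ → 𝕜) (i : σ) :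
    HasDerivAt (fun t => eval (Function.update x i t) p) (eval x (pderiv i p)) (x i) := by
  induction p using MvPolynomial.induction_on with
  | C a =>
    simp only [eval_C, pderiv_C, map_zero]
    exact hasDerivAt_const (x i) a
  | add p q hp hq =>
    simp only [map_add]
    exact hp.add hq
  | mul_X p j hp =>
    have hcoord := hasDerivAt_pi.1 (hasDerivAt_update x i (x i)) j
    simp only [map_mul, eval_X]
    refine (hp.mul hcoord).congr_deriv ?_
    rw [Function.update_eq_self, Derivation.leibniz, pderiv_X]
    rcases eq_or_ne j i with rfl | hji
    · simp [add_comm, mul_comm]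
    · simp [hji, mul_comm]

end Calculus

section Real

theorem eval_pderiv_eq_zero_of_forall_eval_le {G : MvPolynomial σ ℝ} {x : σ → ℝ}
    (h : ∀ y, eval y G ≤ eval x G) (i : σ) : eval x (pderiv i G) = 0 := by
  classical
  refine IsLocalMax.hasDerivAt_eq_zero (Filter.Eventually.of_forall fun t => ?_)
    (hasDerivAt_eval_update G x i)
  simpa only [Function.update_eq_self] using h (Function.update x i t)

variable [Fintype σ] {P : MvPolynomial σ ℝ} {m : ℕ}

theorem isCompact_setOf_sum_sq_eq_one : IsCompact {x : σ → ℝ | ∑ i, x i ^ 2 = 1} := by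
  refine (isCompact_closedBall (0 : σ → ℝ) 1).of_isClosed_subset
    (isClosed_eq (by fun_prop) continuous_const) fun x hx => ?_
  rw [mem_closedBall_zero_iff, pi_norm_le_iff_of_nonneg zero_le_one]
  intro i
  rw [Real.norm_eq_abs, ← sq_le_one_iff_abs_le_one]
  exact (hx : ∑ i, x i ^ 2 = 1) ▸
    Finset.single_le_sum (fun j _ => sq_nonneg (x j)) (Finset.mem_univ i)

theorem exists_sum_sq_eq_one_and_eq_sqrt_smul [Nonempty σ] (y : σ → ℝ) :
    ∃ u : σ → ℝ, ∑ i, u i ^ 2 = 1 ∧ y = √(∑ i, y i ^ 2) • u := by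
  classical
  set s := ∑ i, y i ^ 2
  by_cases hs : s = 0
  · obtain ⟨i⟩ := ‹Nonempty σ›
    refine ⟨Pi.single i 1, by simp [Pi.single_apply], ?_⟩
    have hy : ∀ j, y j = 0 := fun j => pow_eq_zero_iff two_ne_zero |>.mp <|
      (Finset.sum_eq_zero_iff_of_nonneg fun k _ => sq_nonneg (y k)).mp hs j (Finset.mem_univ j)
    rw [hs, Real.sqrt_zero, zero_smul]
    ext j
    exact hy j
  · have hs' : 0 < s := lt_of_le_of_ne (by positivity) (Ne.symm hs)
    refine ⟨(√s)⁻¹ • y, ?_, ?_⟩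
    · simp only [Pi.smul_apply, smul_eq_mul, mul_pow, ← Finset.mul_sum, inv_pow,
        Real.sq_sqrt hs'.le]
      exact inv_mul_cancel₀ hs
    · rw [smul_smul, mul_inv_cancel₀ (Real.sqrt_pos.mpr hs').ne', one_smul]

theorem IsHomogeneous.exists_forall_sq_eval_le [Nonempty σ] (hP : P.IsHomogeneous m) :
    ∃ x₀ : σ → ℝ, ∑ i, x₀ i ^ 2 = 1 ∧ ∀ y, eval y P ^ 2 ≤ eval x₀ P ^ 2 * (∑ i, y i ^ 2) ^ m := by
  obtain ⟨x₀, hx₀, hmax⟩ := isCompact_setOf_sum_sq_eq_one.exists_isMaxOn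
    ((exists_sum_sq_eq_one_and_eq_sqrt_smul 0).imp fun _ => And.left)
    ((continuous_eval P).pow 2).continuousOn
  refine ⟨x₀, hx₀, fun y => ?_⟩
  obtain ⟨u, hu, hyu⟩ := exists_sum_sq_eq_one_and_eq_sqrt_smul y
  calc eval y P ^ 2 = eval (√(∑ i, y i ^ 2) • u) P ^ 2 := by rw [← hyu]
    _ = (√(∑ i, y i ^ 2) ^ 2) ^ m * eval u P ^ 2 := by
        rw [hP.eval_smul]
        ring
    _ ≤ eval x₀ P ^ 2 * (∑ i, y i ^ 2) ^ m := by
        rw [Real.sq_sqrt (by positivity), mul_comm]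
        exact mul_le_mul_of_nonneg_right (hmax hu) (by positivity)

theorem eval_mul_eval_pderiv_eq_of_forall_sq_eval_le {x₀ : σ → ℝ} (hx₀ : ∑ i, x₀ i ^ 2 = 1)
    (hmax : ∀ y, eval y P ^ 2 ≤ eval x₀ P ^ 2 * (∑ i, y i ^ 2) ^ m) (i : σ) :
    eval x₀ P * eval x₀ (pderiv i P) = m * eval x₀ P ^ 2 * x₀ i := by
  classical
  set G := P ^ 2 - C (eval x₀ P ^ 2) * (∑ j, X j ^ 2) ^ m
  have hG (y : σ → ℝ) : eval y G = eval y P ^ 2 - eval x₀ P ^ 2 * (∑ j, y j ^ 2) ^ m := by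
    simp [G]
  have hcrit := eval_pderiv_eq_zero_of_forall_eval_le (G := G) (x := x₀)
    (fun y => by rw [hG, hG, hx₀, one_pow]; linarith [hmax y]) i
  simp only [G, map_sub, Derivation.leibniz_pow, Nat.add_one_sub_one, pow_one, smul_eq_mul,
    nsmul_eq_mul, Nat.cast_ofNat, Derivation.leibniz, map_sum, pderiv_X, Pi.single_apply, mul_ite,
    mul_one, mul_zero, smul_ite, Finset.sum_ite_eq', Finset.mem_univ, ↓reduceIte,
    derivation_C, add_zero, map_mul, eval_ofNat, map_pow, eval_C, map_natCast, eval_X, hx₀, one_pow,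
    one_mul] at hcrit
  linear_combination hcrit / 2

theorem IsHomogeneous.eq_zero_of_infLaplacian_eq_zero (hP : P.IsHomogeneous m) (hm : 2 ≤ m)
    (h : infLaplacian P = 0) : P = 0 := by
  cases isEmpty_or_nonempty σ
  · exact hP.eq_zero_of_eq (isHomogeneous_of_isEmpty (f := P)) (by omega) rfl
  obtain ⟨x₀, hx₀, hmax⟩ := hP.exists_forall_sq_eval_le
  set p₀ := eval x₀ P
  suffices hp₀ : p₀ = 0 by
    refine MvPolynomial.funext fun y => ?_
    simpa [hp₀] using hmax y
  by_contra hp₀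
  have hgrad (i : σ) : eval x₀ (pderiv i P) = m * p₀ * x₀ i :=
    mul_left_cancel₀ hp₀ <| by
      rw [eval_mul_eval_pderiv_eq_of_forall_sq_eval_le hx₀ hmax i]
      ring
  have hgradNormSq : eval x₀ (gradNormSq P) = (m * p₀) ^ 2 := by
    simp only [gradNormSq, map_sum, map_pow, hgrad, mul_pow, ← Finset.mul_sum, hx₀, mul_one]
  have hΔ := hP.eval_infLaplacian_of_eval_pderiv_eq hgrad
  rw [h, map_zero, hgradNormSq] at hΔ
  have hm₀ : (m : ℝ) ≠ 0 := by exact_mod_cast (by omega : m ≠ 0)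
  have hm₁ : ((m - 1 : ℕ) : ℝ) ≠ 0 := by exact_mod_cast (by omega : m - 1 ≠ 0)
  have hmp₀ : (m : ℝ) * p₀ ≠ 0 := mul_ne_zero hm₀ hp₀
  exact mul_ne_zero (mul_ne_zero hmp₀ hm₁) (pow_ne_zero 2 hmp₀) hΔ.symm

end Real

end MvPolynomial

/-- There is no nonzero homogeneous polynomial solution of degree `m ≥ 2` to the minimal
surface equation on `ℝⁿ`: if `P` is homogeneous of degree `m ≥ 2` and satisfies
`(1 + |∇P|²)ΔP − ∑ᵢⱼ P_{xᵢ} P_{xⱼ} P_{xᵢxⱼ} = 0`, then `P = 0`. -/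
theorem stmt4 {n : ℕ} (m : ℕ) (hm : 2 ≤ m) (P : MvPolynomial (Fin n) ℝ)
    (hhom : P.IsHomogeneous m)
    (hMSE : (1 + ∑ i : Fin n, (pderiv i P) ^ 2) * (∑ i : Fin n, pderiv i (pderiv i P))
      - ∑ i : Fin n, ∑ j : Fin n,
          pderiv i P * pderiv j P * pderiv j (pderiv i P) = 0) :
    P = 0 :=
  hhom.eq_zero_of_infLaplacian_eq_zero hm (hhom.infLaplacian_eq_zero_of_minimalSurface hm hMSE)
end

section
/- Let P_m be a homogeneous polynomial on ℝⁿ of degree m ≥ 2 and suppose there exists a ≠ 0 such that (1 + a²)ΔP_m − a² P_{m,x_1 x_1} = 0 and P_{m,x_1} ΔP_m − ∑_{i=1}^n P_{m,x_i x_1} P_{m,x_i} = 0 hold on ℝⁿ. Then the function (1/(1+a²)) P_{m,x_1}² + ∑_{i=2}^n P_{m,x_i}² is independent of x_1, and consequently P_m is independent of x_1. -/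
/-!
Differentiating `E = P₁² / (1 + a²) + ∑_{i ≥ 2} Pᵢ²` in `x₁` and substituting the two equations
gives `(1 + a²) ∂₁E = 2 P₁ ((1 + a²) ΔP − a² P₁₁) = 0`. Along every line parallel to the
`x₁`-axis, `E` is then a constant sum of squares with positive weights, so each summand is a
bounded, hence constant, real polynomial of one variable. Thus `∂₁P₁ = 0` and `∂₁Pᵢ = ∂ᵢP₁ = 0`,
so `P₁` is constant; being homogeneous of degree `m − 1 ≥ 1`, it vanishes by Euler's identity.
-/

open MvPolynomial

theorem Polynomial.derivative_eq_zero_of_forall_sq_le {q : Polynomial ℝ} {B : ℝ}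
    (h : ∀ t, q.eval t ^ 2 ≤ B) : Polynomial.derivative q = 0 := by
  by_contra hq
  have hdeg : 0 < (q ^ 2).degree := by
    rw [← Polynomial.natDegree_pos_iff_degree_pos, Polynomial.natDegree_pow]
    have := Nat.pos_of_ne_zero (Polynomial.derivative_ne_zero.mp hq)
    omega
  obtain ⟨t, ht⟩ := ((q ^ 2).abs_tendsto_atTop hdeg |>.eventually_gt_atTop B).exists
  rw [Polynomial.eval_pow, abs_pow, sq_abs] at ht
  exact (h t).not_gt ht

namespace MvPolynomial

variable {R σ : Type*}

theorem pderiv_comm [CommRing R] (i j : σ) (p : MvPolynomial σ R) :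
    pderiv i (pderiv j p) = pderiv j (pderiv i p) := by
  classical
  have h : ⁅pderiv i, pderiv j⁆ = (0 : Derivation R (MvPolynomial σ R) (MvPolynomial σ R)) :=
    derivation_ext fun k => by
      rw [Derivation.commutator_apply]
      simp only [pderiv_X, Pi.single_apply]
      split_ifs <;> simp
  simpa [Derivation.commutator_apply, sub_eq_zero] using congr($h p)

theorem IsHomogeneous.eq_zero_of_forall_pderiv_eq_zero [CommRing R] [IsDomain R] [CharZero R]
    [Fintype σ] {p : MvPolynomial σ R} {k : ℕ} (hp : p.IsHomogeneous k) (hk : k ≠ 0)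
    (h : ∀ i, pderiv i p = 0) : p = 0 := by
  have := hp.sum_X_mul_pderiv
  simp only [h, mul_zero, Finset.sum_const_zero] at this
  exact (smul_eq_zero.mp this.symm).resolve_left hk

section restrictLine

variable [CommRing R] [DecidableEq σ]

noncomputable def restrictLine (x : σ → R) (j : σ) : MvPolynomial σ R →ₐ[R] Polynomial R :=
  aeval (Function.update (fun i => Polynomial.C (x i)) j Polynomial.X)

theorem eval_restrictLine (x : σ → R) (j : σ) (p : MvPolynomial σ R) (t : R) :
    (restrictLine x j p).eval t = eval (Function.update x j t) p := by
  induction p using MvPolynomial.induction_on with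
  | C a => simp [restrictLine]
  | add p q hp hq => simp [hp, hq]
  | mul_X p k hp =>
    by_cases hk : k = j
    · subst hk; simp [restrictLine, ← hp]
    · simp [restrictLine, ← hp, hk]

theorem restrictLine_pderiv (x : σ → R) (j : σ) (p : MvPolynomial σ R) :
    restrictLine x j (pderiv j p) = Polynomial.derivative (restrictLine x j p) := by
  induction p using MvPolynomial.induction_on with
  | C a => simp [restrictLine]
  | add p q hp hq => simp [hp, hq]
  | mul_X p k hp =>
    rw [pderiv_mul, map_add, map_mul, map_mul, hp, map_mul, Polynomial.derivative_mul]
    by_cases hk : k = j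
    · subst hk; simp [restrictLine]
    · simp [restrictLine, hk, pderiv_X_of_ne hk]

theorem pderiv_eq_zero_of_forall_derivative_restrictLine [IsDomain R] [Infinite R] {j : σ}
    {p : MvPolynomial σ R} (h : ∀ x, Polynomial.derivative (restrictLine x j p) = 0) :
    pderiv j p = 0 :=
  funext fun x => by
    simpa [← restrictLine_pderiv, eval_restrictLine] using congr(Polynomial.eval (x j) $(h x))

end restrictLine

theorem pderiv_eq_zero_of_pderiv_sum_C_mul_sq_eq_zero {ι : Type*} [DecidableEq σ] {j : σ}
    {s : Finset ι} {w : ι → ℝ} (hw : ∀ i ∈ s, 0 < w i) {p : ι → MvPolynomial σ ℝ}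
    (h : pderiv j (∑ i ∈ s, C (w i) * p i ^ 2) = 0) {i : ι} (hi : i ∈ s) :
    pderiv j (p i) = 0 := by
  refine pderiv_eq_zero_of_forall_derivative_restrictLine fun x => ?_
  have hconst := Polynomial.eq_C_of_derivative_eq_zero
    (by rw [← restrictLine_pderiv, h, map_zero] :
      Polynomial.derivative (restrictLine x j (∑ i ∈ s, C (w i) * p i ^ 2)) = 0)
  set k := (restrictLine x j (∑ i ∈ s, C (w i) * p i ^ 2)).coeff 0
  refine Polynomial.derivative_eq_zero_of_forall_sq_le (B := k / w i) fun t => ?_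
  have hk := congr(Polynomial.eval t $hconst)
  rw [eval_restrictLine, Polynomial.eval_C] at hk
  simp only [map_sum, map_mul, map_pow, eval_C] at hk
  rw [eval_restrictLine, le_div_iff₀ (hw i hi), ← hk, mul_comm]
  exact Finset.single_le_sum (f := fun l => w l * eval (Function.update x j t) (p l) ^ 2)
    (fun l hl => mul_nonneg (hw l hl).le (sq_nonneg _)) hi

theorem pderiv_C_inv_mul_sq_add_sum_sq_eq_zero [Fintype σ] [DecidableEq σ] (j : σ) (a : ℝ)
    (P : MvPolynomial σ ℝ)
    (heqi : C (1 + a ^ 2) * (∑ i, pderiv i (pderiv i P)) - C (a ^ 2) * pderiv j (pderiv j P) = 0)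
    (heqii : pderiv j P * (∑ i, pderiv i (pderiv i P))
      - ∑ i, pderiv j (pderiv i P) * pderiv i P = 0) :
    pderiv j (C (1 / (1 + a ^ 2)) * (pderiv j P) ^ 2
      + ∑ i ∈ Finset.univ.erase j, (pderiv i P) ^ 2) = 0 := by
  have hpos : 1 + a ^ 2 ≠ 0 := by positivity
  have hexp : pderiv j (C (1 / (1 + a ^ 2)) * (pderiv j P) ^ 2
      + ∑ i ∈ Finset.univ.erase j, (pderiv i P) ^ 2)
      = 2 * (C (1 / (1 + a ^ 2)) * pderiv j P * pderiv j (pderiv j P)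
        + ∑ i ∈ Finset.univ.erase j, pderiv j (pderiv i P) * pderiv i P) := by
    rw [mul_add, Finset.mul_sum]
    simp only [map_add, pderiv_C_mul, map_sum, pderiv_pow]
    congr 1
    · push_cast; ring
    · refine Finset.sum_congr rfl fun i _ => ?_
      push_cast; ring
  rw [← Finset.add_sum_erase _ (fun i => pderiv j (pderiv i P) * pderiv i P)
    (Finset.mem_univ j)] at heqii
  have hC : C (1 + a ^ 2) * C (1 / (1 + a ^ 2)) = (1 : MvPolynomial σ ℝ) := by
    rw [← map_mul, mul_one_div_cancel hpos, map_one]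
  rw [map_add, map_one] at heqi hC
  have : (1 + C (a ^ 2)) * pderiv j (C (1 / (1 + a ^ 2)) * (pderiv j P) ^ 2
      + ∑ i ∈ Finset.univ.erase j, (pderiv i P) ^ 2) = 0 := by
    rw [hexp]
    linear_combination (2 * pderiv j P * pderiv j (pderiv j P)) * hC - 2 * (1 + C (a ^ 2)) * heqii
      + 2 * pderiv j P * heqi
  refine (mul_eq_zero.mp this).resolve_left ?_
  rw [← map_one C, ← map_add]
  exact (C_ne_zero).mpr hpos

end MvPolynomial

theorem stmt7_general {n : ℕ} (m : ℕ) (hm : 2 ≤ m) (a : ℝ)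
    (Pm : MvPolynomial (Fin (n + 1)) ℝ) (hhom : Pm.IsHomogeneous m)
    (heqi : C (1 + a ^ 2) * (∑ i : Fin (n + 1), pderiv i (pderiv i Pm))
      - C (a ^ 2) * pderiv 0 (pderiv 0 Pm) = 0)
    (heqii : pderiv 0 Pm * (∑ i : Fin (n + 1), pderiv i (pderiv i Pm))
      - ∑ i : Fin (n + 1), pderiv 0 (pderiv i Pm) * pderiv i Pm = 0) :
    pderiv 0 (C (1 / (1 + a ^ 2)) * (pderiv 0 Pm) ^ 2
        + ∑ i ∈ Finset.univ.erase (0 : Fin (n + 1)), (pderiv i Pm) ^ 2) = 0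
    ∧ pderiv 0 Pm = 0 := by
  have hE := pderiv_C_inv_mul_sq_add_sum_sq_eq_zero 0 a Pm heqi heqii
  refine ⟨hE, ?_⟩
  set w : Fin (n + 1) → ℝ := fun i => if i = 0 then 1 / (1 + a ^ 2) else 1
  have hw : ∀ i ∈ Finset.univ, 0 < w i := fun i _ => by simp only [w]; split_ifs <;> positivity
  have hE_sum : C (1 / (1 + a ^ 2)) * (pderiv 0 Pm) ^ 2
      + ∑ i ∈ Finset.univ.erase (0 : Fin (n + 1)), (pderiv i Pm) ^ 2
      = ∑ i, C (w i) * pderiv i Pm ^ 2 := by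
    rw [← Finset.add_sum_erase _ _ (Finset.mem_univ 0)]
    refine congr_arg₂ (· + ·) (by simp [w]) (Finset.sum_congr rfl fun i hi => ?_)
    simp [w, Finset.ne_of_mem_erase hi]
  rw [hE_sum] at hE
  have hgrad : ∀ i, pderiv i (pderiv 0 Pm) = 0 := fun i => by
    rw [pderiv_comm]
    exact pderiv_eq_zero_of_pderiv_sum_C_mul_sq_eq_zero hw hE (Finset.mem_univ i)
  exact hhom.pderiv.eq_zero_of_forall_pderiv_eq_zero (by omega) hgrad

/-- If `P_m` is homogeneous of degree `m ≥ 2` on `ℝⁿ` (with `n ≥ 1`; `x_1` is coordinate `0`)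
and for some `a ≠ 0` the two equations
`(1 + a²) ΔP_m − a² P_{m,x₁x₁} = 0` and
`P_{m,x₁} ΔP_m − ∑ᵢ P_{m,xᵢx₁} P_{m,xᵢ} = 0`
hold, then `(1/(1+a²)) P_{m,x₁}² + ∑_{i≥2} P_{m,xᵢ}²` is independent of `x₁`,
and consequently `P_m` is independent of `x₁`. -/
theorem stmt7 {n : ℕ} (m : ℕ) (hm : 2 ≤ m) (a : ℝ) (ha : a ≠ 0)
    (Pm : MvPolynomial (Fin (n + 1)) ℝ) (hhom : Pm.IsHomogeneous m)
    (heqi : C (1 + a ^ 2) * (∑ i : Fin (n + 1), pderiv i (pderiv i Pm))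
      - C (a ^ 2) * pderiv 0 (pderiv 0 Pm) = 0)
    (heqii : pderiv 0 Pm * (∑ i : Fin (n + 1), pderiv i (pderiv i Pm))
      - ∑ i : Fin (n + 1), pderiv 0 (pderiv i Pm) * pderiv i Pm = 0) :
    pderiv 0 (C (1 / (1 + a ^ 2)) * (pderiv 0 Pm) ^ 2
        + ∑ i ∈ Finset.univ.erase (0 : Fin (n + 1)), (pderiv i Pm) ^ 2) = 0
    ∧ pderiv 0 Pm = 0 :=
  stmt7_general m hm a Pm hhom heqi heqii
end
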